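/- arXiv:1807.09432 — 7 statements merged into one kernel-verified Lean document; each statement's English description precedes it below -/
import Mathlib

section
/- Let T > 0 be the message period and let S_A, S_B be real numbers with 1 + S_A ≠ 0, 1 + S_B ≠ 0, and T + ΔT_0 ≠ 0 for a real ΔT_0. If the compromised ECU A transmits every T̃ = T + ΔT_0 seconds in its own clock, the inter-arrival time observed by the receiver R is T̂'' = (T + ΔT_0)/(1 + S_A) and the clock skew estimated by R is Ŝ'' = (T − T̂'')/T̂'' = (S_A·T − ΔT_0)/(T + ΔT_0). Moreover, Ŝ'' equals the targeted ECU's skew S_B if and only if ΔT_0 = (S_A − S_B)·T/(1 + S_B). -/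
/-- inter-arrival time and estimated skew under the cloaking attack,
and the condition on ΔT₀ for exactly emulating the targeted ECU's skew. -/
theorem cloaking_attack_skew (T S_A S_B ΔT₀ : ℝ) (hT : 0 < T)
    (hA : 1 + S_A ≠ 0) (hB : 1 + S_B ≠ 0) (hTΔ : T + ΔT₀ ≠ 0)
    (Tobs Sest : ℝ) (hTobs : Tobs = (T + ΔT₀) / (1 + S_A))
    (hSest : Sest = (T - Tobs) / Tobs) :
    Sest = (S_A * T - ΔT₀) / (T + ΔT₀) ∧
      (Sest = S_B ↔ ΔT₀ = (S_A - S_B) * T / (1 + S_B)) := by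
  subst hTobs hSest
  have h1 : (T - (T + ΔT₀) / (1 + S_A)) / ((T + ΔT₀) / (1 + S_A))
      = (S_A * T - ΔT₀) / (T + ΔT₀) := by
    field_simp
    ring
  refine ⟨h1, ?_⟩
  rw [h1]
  rw [div_eq_iff hTΔ, eq_div_iff hB]
  constructor <;> intro h <;> nlinarith [h]
end

section
/- Let T > 0 and let S_A, S_B be real numbers with 1 + S_A ≠ 0 and 1 + S_B ≠ 0. Set S_BA = (S_B − S_A)/(1 + S_A) and ΔT_0 = (S_A − S_B)·T/(1 + S_B). Then the required inter-transmission time satisfies T̃ = T + ΔT_0 = T − (S_BA/(1 + S_BA))·T = T/(1 + S_BA). -/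
/-! The relative skew satisfies `1 + S_BA = (1 + S_B) / (1 + S_A)`, so both sides equal
`T (1 + S_A) / (1 + S_B)`: the attacker stretches each period by the ratio of the two clock rates. -/

section SkewAlgebra

variable {K : Type*} [Field K]

theorem one_add_sub_div_one_add {a b : K} (ha : 1 + a ≠ 0) :
    1 + (b - a) / (1 + a) = (1 + b) / (1 + a) := by
  field_simp
  ring

theorem add_sub_mul_div_one_add {a b T : K} (hb : 1 + b ≠ 0) :
    T + (a - b) * T / (1 + b) = T * (1 + a) / (1 + b) := by
  field_simp
  ring

theorem sub_div_one_add_mul {s T : K} (hs : 1 + s ≠ 0) :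
    T - s / (1 + s) * T = T / (1 + s) := by
  field_simp
  ring

end SkewAlgebra

theorem cloaking_intertransmission_time_general (T S_A S_B : ℝ)
    (hA : 1 + S_A ≠ 0) (hB : 1 + S_B ≠ 0)
    (S_BA ΔT₀ : ℝ) (hBA : S_BA = (S_B - S_A) / (1 + S_A))
    (hΔT₀ : ΔT₀ = (S_A - S_B) * T / (1 + S_B)) :
    T + ΔT₀ = T - (S_BA / (1 + S_BA)) * T ∧ T + ΔT₀ = T / (1 + S_BA) := by
  have hRate : 1 + S_BA = (1 + S_B) / (1 + S_A) := hBA ▸ one_add_sub_div_one_add hA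
  have hRate_ne : 1 + S_BA ≠ 0 := hRate ▸ div_ne_zero hB hA
  have hPeriod : T + ΔT₀ = T / (1 + S_BA) := by
    rw [hΔT₀, add_sub_mul_div_one_add hB, hRate, div_div_eq_mul_div]
  exact ⟨hPeriod.trans (sub_div_one_add_mul hRate_ne).symm, hPeriod⟩

/-- the cloaking inter-transmission time T̃ = T + ΔT₀ equals
T − (S_BA/(1+S_BA))·T = T/(1+S_BA). -/
theorem cloaking_intertransmission_time (T S_A S_B : ℝ) (hT : 0 < T)
    (hA : 1 + S_A ≠ 0) (hB : 1 + S_B ≠ 0)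
    (S_BA ΔT₀ : ℝ) (hBA : S_BA = (S_B - S_A) / (1 + S_A))
    (hΔT₀ : ΔT₀ = (S_A - S_B) * T / (1 + S_B)) :
    T + ΔT₀ = T - (S_BA / (1 + S_BA)) * T ∧ T + ΔT₀ = T / (1 + S_BA) :=
  cloaking_intertransmission_time_general T S_A S_B hA hB S_BA ΔT₀ hBA hΔT₀
end

section
/- Let N ≥ 2 be an integer, let S, O_acc, t, T_0, μ, ΔT, μ_prev, d be real numbers, let σ > 0, and let η_1, …, η_N be i.i.d. real Gaussian random variables with mean d and variance σ²/2. Define e = O_acc + (1/(N−1)) Σ_{i=2}^{N} [(i−1)·|μ + ΔT − μ_prev| + (η_i − η_1)] − S·(t + T_0 + (N−1)(μ + ΔT) + (η_N − η_1)). Then e is Gaussian with mean μ_e = O_acc + (N/2)·|μ + ΔT − μ_prev| − S·(t + T_0 + (N−1)(μ + ΔT)) and variance σ_e² = (1/2)·((N − 2S)/(N−1) + 2S² − 2S)·σ². -/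
/-!
The error is an affine function of the arrival-time noises: `e = mean + ∑ᵢ wᵢ ηᵢ` with weights
`w₁ = S - 1`, `wᵢ = 1/(N-1)` for `1 < i < N` and `w_N = 1/(N-1) - S`. A linear combination of
independent Gaussians is Gaussian with mean `d ∑ wᵢ` and variance `(σ²/2) ∑ wᵢ²`. The weights sum
to zero, so the common mean `d` of the noises cancels, and `∑ wᵢ² = (N - 2S)/(N - 1) + 2S² - 2S`.
-/

open MeasureTheory ProbabilityTheory Finset
open scoped NNReal

namespace ProbabilityTheory

variable {ι Ω : Type*} [MeasurableSpace Ω] {P : Measure Ω} [IsProbabilityMeasure P]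
  {X : ι → Ω → ℝ}

theorem iIndepFun.map_sum_eq_gaussianReal {m : ι → ℝ} {v : ι → ℝ≥0} (hindep : iIndepFun X P)
    (hlaw : ∀ i, P.map (X i) = gaussianReal (m i) (v i)) (s : Finset ι) :
    P.map (∑ i ∈ s, X i) = gaussianReal (∑ i ∈ s, m i) (∑ i ∈ s, v i) := by
  classical
  have hmeas i : AEMeasurable (X i) P := .of_map_ne_zero (by simp [hlaw, NeZero.ne])
  induction s using Finset.induction_on with
  | empty => simp [gaussianReal_zero_var, Pi.zero_def]
  | insert i s hi ih =>
    rw [sum_insert hi, sum_insert hi, sum_insert hi]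
    exact gaussianReal_add_gaussianReal_of_indepFun
      (hindep.indepFun_finsetSum_of_notMem₀ hmeas hi).symm (hlaw i) ih

theorem iIndepFun.map_sum_mul_eq_gaussianReal {m : ℝ} {v : ℝ≥0} (hindep : iIndepFun X P)
    (hlaw : ∀ i, P.map (X i) = gaussianReal m v) (c : ι → ℝ) (s : Finset ι) :
    P.map (fun ω ↦ ∑ i ∈ s, c i * X i ω) =
      gaussianReal ((∑ i ∈ s, c i) * m) ((∑ i ∈ s, c i ^ 2).toNNReal * v) := by
  have hscaled i :
      P.map ((c i * ·) ∘ X i) = gaussianReal (c i * m) ((c i ^ 2).toNNReal * v) := by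
    have hmeas : AEMeasurable (X i) P := .of_map_ne_zero (by simp [hlaw, NeZero.ne])
    rw [← AEMeasurable.map_map_of_aemeasurable (measurable_const_mul _).aemeasurable hmeas,
      hlaw, gaussianReal_map_const_mul, Real.toNNReal_of_nonneg (sq_nonneg _)]
  have hsum := (hindep.comp (fun i x ↦ c i * x) fun i ↦ measurable_const_mul _)
    |>.map_sum_eq_gaussianReal hscaled s
  rw [← sum_mul, ← sum_mul, ← Real.toNNReal_sum_of_nonneg fun i _ ↦ sq_nonneg _] at hsum
  convert hsum using 2
  ext ω
  simp [Finset.sum_apply]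

end ProbabilityTheory

theorem Finset.sum_Icc_eq_add_sum_Icc_add_one {M : Type*} [AddCommMonoid M] {a b : ℕ}
    (hab : a ≤ b) (f : ℕ → M) : ∑ i ∈ Icc a b, f i = f a + ∑ i ∈ Icc (a + 1) b, f i := by
  rw [← insert_Icc_add_one_left_eq_Icc hab, sum_insert (by simp)]

theorem sum_Icc_two_cast_sub_one (N : ℕ) :
    ∑ i ∈ Icc 2 N, ((i : ℝ) - 1) = N * (N - 1) / 2 := by
  induction N with
  | zero => simp
  | succ n ih =>
    rcases n with _ | n
    · simp
    rw [sum_Icc_succ_top (by omega), ih]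
    push_cast
    ring

/-- The coefficient of the arrival-time noise `η i` in the identification error. -/
noncomputable def firstBatchNoiseWeight (N : ℕ) (S : ℝ) (i : ℕ) : ℝ :=
  (if i = 1 then S - 1 else 1 / ((N : ℝ) - 1)) - if i = N then S else 0

section FirstBatchNoiseWeight

variable {N : ℕ} (S : ℝ)

theorem firstBatchNoiseWeight_one (hN : 2 ≤ N) : firstBatchNoiseWeight N S 1 = S - 1 := by
  simp [firstBatchNoiseWeight, show 1 ≠ N by omega]

theorem firstBatchNoiseWeight_self (hN : 2 ≤ N) :
    firstBatchNoiseWeight N S N = 1 / ((N : ℝ) - 1) - S := by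
  simp [firstBatchNoiseWeight, show N ≠ 1 by omega]

theorem sum_Icc_firstBatchNoiseWeight_mul (hN : 2 ≤ N) (x : ℕ → ℝ) :
    ∑ i ∈ Icc 1 N, firstBatchNoiseWeight N S i * x i =
      (S - 1) * x 1 + 1 / ((N : ℝ) - 1) * ∑ i ∈ Icc 2 N, x i - S * x N := by
  have htail : ∀ i ∈ Icc 2 N, firstBatchNoiseWeight N S i * x i =
      1 / ((N : ℝ) - 1) * x i - if i = N then S * x i else 0 := by
    intro i hi
    have hi1 : i ≠ 1 := by grind
    simp only [firstBatchNoiseWeight, if_neg hi1]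
    split_ifs <;> ring
  rw [sum_Icc_eq_add_sum_Icc_add_one (by omega), sum_congr rfl htail, sum_sub_distrib, ← mul_sum,
    sum_ite_eq' _ _ (fun i ↦ S * x i), if_pos (by simp [hN]), firstBatchNoiseWeight_one S hN]
  ring

theorem sum_Icc_firstBatchNoiseWeight (hN : 2 ≤ N) :
    ∑ i ∈ Icc 1 N, firstBatchNoiseWeight N S i = 0 := by
  have hN1 : (N : ℝ) - 1 ≠ 0 := sub_ne_zero.2 (by norm_cast; omega)
  have h := sum_Icc_firstBatchNoiseWeight_mul S hN 1
  simp only [Pi.one_apply, mul_one, sum_const, Nat.card_Icc, nsmul_eq_mul] at h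
  rw [h, Nat.cast_sub (by omega)]
  push_cast
  field_simp
  ring

theorem sum_Icc_firstBatchNoiseWeight_sq (hN : 2 ≤ N) :
    ∑ i ∈ Icc 1 N, firstBatchNoiseWeight N S i ^ 2 =
      ((N : ℝ) - 2 * S) / ((N : ℝ) - 1) + 2 * S ^ 2 - 2 * S := by
  have hN1 : (N : ℝ) - 1 ≠ 0 := sub_ne_zero.2 (by norm_cast; omega)
  have htail : ∑ i ∈ Icc 2 N, firstBatchNoiseWeight N S i = 1 - S := by
    have h := sum_Icc_firstBatchNoiseWeight S hN
    rw [sum_Icc_eq_add_sum_Icc_add_one (by omega), firstBatchNoiseWeight_one S hN] at h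
    linarith
  simp only [sq, sum_Icc_firstBatchNoiseWeight_mul S hN, htail, firstBatchNoiseWeight_one S hN,
    firstBatchNoiseWeight_self S hN]
  field_simp
  ring

theorem firstBatchError_eq_add_sum_firstBatchNoiseWeight_mul (hN : 2 ≤ N) (O a b c : ℝ)
    (x : ℕ → ℝ) :
    O + 1 / ((N : ℝ) - 1) * ∑ i ∈ Icc 2 N, (((i : ℝ) - 1) * a + (x i - x 1)) -
        S * (c + ((N : ℝ) - 1) * b + (x N - x 1)) =
      O + (N / 2) * a - S * (c + ((N : ℝ) - 1) * b) +
        ∑ i ∈ Icc 1 N, firstBatchNoiseWeight N S i * x i := by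
  have hN1 : (N : ℝ) - 1 ≠ 0 := sub_ne_zero.2 (by norm_cast; omega)
  rw [sum_Icc_firstBatchNoiseWeight_mul S hN, sum_add_distrib, sum_sub_distrib, ← sum_mul,
    sum_Icc_two_cast_sub_one, sum_const, Nat.card_Icc, nsmul_eq_mul, Nat.cast_sub (by omega)]
  push_cast
  field_simp
  ring

end FirstBatchNoiseWeight

theorem sota_first_batch_error_gaussian_general
    {Ω : Type*} [MeasurableSpace Ω] (P : Measure Ω) [IsProbabilityMeasure P]
    (N : ℕ) (hN : 2 ≤ N)
    (S Oacc t T₀ μ ΔT μprev d : ℝ) (σ : ℝ)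
    (η : ℕ → Ω → ℝ)
    (hindep : iIndepFun η P)
    (hgauss : ∀ i, Measure.map (η i) P = gaussianReal d (Real.toNNReal (σ ^ 2 / 2)))
    (e : Ω → ℝ)
    (he : ∀ ω, e ω = Oacc +
      (1 / ((N : ℝ) - 1)) *
        ∑ i ∈ Finset.Icc 2 N,
          (((i : ℝ) - 1) * |μ + ΔT - μprev| + (η i ω - η 1 ω)) -
      S * (t + T₀ + ((N : ℝ) - 1) * (μ + ΔT) + (η N ω - η 1 ω))) :
    Measure.map e P =
      gaussianReal
        (Oacc + ((N : ℝ) / 2) * |μ + ΔT - μprev| -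
          S * (t + T₀ + ((N : ℝ) - 1) * (μ + ΔT)))
        (Real.toNNReal
          ((1 / 2) * (((N : ℝ) - 2 * S) / ((N : ℝ) - 1) + 2 * S ^ 2 - 2 * S) * σ ^ 2)) := by
  set mean := Oacc + ((N : ℝ) / 2) * |μ + ΔT - μprev| - S * (t + T₀ + ((N : ℝ) - 1) * (μ + ΔT))
  set noise := fun ω ↦ ∑ i ∈ Icc 1 N, firstBatchNoiseWeight N S i * η i ω
  have hnoise : P.map noise = _ :=
    hindep.map_sum_mul_eq_gaussianReal hgauss (firstBatchNoiseWeight N S) (Icc 1 N)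
  have he' : e = (mean + ·) ∘ noise := funext fun ω ↦ by
    rw [he ω, firstBatchError_eq_add_sum_firstBatchNoiseWeight_mul S hN]
    rfl
  have hvar_nonneg : 0 ≤ ∑ i ∈ Icc 1 N, firstBatchNoiseWeight N S i ^ 2 :=
    sum_nonneg fun i _ ↦ sq_nonneg _
  rw [he', ← AEMeasurable.map_map_of_aemeasurable (measurable_const_add mean).aemeasurable
      (.of_map_ne_zero (by rw [hnoise]; exact NeZero.ne _)), hnoise, gaussianReal_map_const_add,
    ← Real.toNNReal_mul hvar_nonneg, sum_Icc_firstBatchNoiseWeight S hN,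
    sum_Icc_firstBatchNoiseWeight_sq S hN, zero_mul, zero_add]
  congr 2
  ring

/-- Lemma 1: the identification error of the first attack batch of
the SOTA IDS is Gaussian with mean
μ_e = O_acc + (N/2)·|μ + ΔT − μ_prev| − S·(t + T₀ + (N−1)(μ + ΔT)) and variance
σ_e² = (1/2)·((N − 2S)/(N−1) + 2S² − 2S)·σ². -/
theorem sota_first_batch_error_gaussian
    {Ω : Type*} [MeasurableSpace Ω] (P : Measure Ω) [IsProbabilityMeasure P]
    (N : ℕ) (hN : 2 ≤ N)
    (S Oacc t T₀ μ ΔT μprev d : ℝ) (σ : ℝ) (hσ : 0 < σ)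
    (η : ℕ → Ω → ℝ) (hmeas : ∀ i, Measurable (η i))
    (hindep : iIndepFun η P)
    (hgauss : ∀ i, Measure.map (η i) P = gaussianReal d (Real.toNNReal (σ ^ 2 / 2)))
    (e : Ω → ℝ)
    (he : ∀ ω, e ω = Oacc +
      (1 / ((N : ℝ) - 1)) *
        ∑ i ∈ Finset.Icc 2 N,
          (((i : ℝ) - 1) * |μ + ΔT - μprev| + (η i ω - η 1 ω)) -
      S * (t + T₀ + ((N : ℝ) - 1) * (μ + ΔT) + (η N ω - η 1 ω))) :
    Measure.map e P =
      gaussianReal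
        (Oacc + ((N : ℝ) / 2) * |μ + ΔT - μprev| -
          S * (t + T₀ + ((N : ℝ) - 1) * (μ + ΔT)))
        (Real.toNNReal
          ((1 / 2) * (((N : ℝ) - 2 * S) / ((N : ℝ) - 1) + 2 * S ^ 2 - 2 * S) * σ ^ 2)) :=
  sota_first_batch_error_gaussian_general P N hN S Oacc t T₀ μ ΔT μprev d σ η hindep hgauss e he
end

section
/- Let τ > 0, Γ > 0, κ ≥ 0, let μ_0 ∈ ℝ and σ_0 > 0, and let e be a real Gaussian random variable with mean μ_0 and variance σ_0². Define the undetected event A = { (e > κ → (e − κ)²/(2τ) + (e − κ)/2 ≤ Γ) ∧ (e < −κ → (−e − κ)²/(2τ) + (−e − κ)/2 ≤ Γ) }. Then P(A) = P( (τ − √(τ² + 8τΓ))/2 − κ ≤ e ≤ (−τ + √(τ² + 8τΓ))/2 + κ ). -/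
open MeasureTheory ProbabilityTheory

lemma key_iff (τ Γ κ : ℝ) (hτ : 0 < τ) (hΓ : 0 < Γ) (hκ : 0 ≤ κ) (x : ℝ) :
    ((κ < x → (x - κ) ^ 2 / (2 * τ) + (x - κ) / 2 ≤ Γ) ∧
     (x < -κ → (-x - κ) ^ 2 / (2 * τ) + (-x - κ) / 2 ≤ Γ)) ↔
    ((τ - Real.sqrt (τ ^ 2 + 8 * τ * Γ)) / 2 - κ ≤ x ∧
     x ≤ (-τ + Real.sqrt (τ ^ 2 + 8 * τ * Γ)) / 2 + κ) := by
  set s := Real.sqrt (τ ^ 2 + 8 * τ * Γ) with hs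
  have hs2 : s ^ 2 = τ ^ 2 + 8 * τ * Γ := Real.sq_sqrt (by positivity)
  have hs0 : 0 ≤ s := Real.sqrt_nonneg _
  have hsτ : τ < s := by nlinarith
  constructor
  · rintro ⟨h1, h2⟩
    constructor
    · by_cases hx : x < -κ
      · have := h2 hx
        have h2τ : 0 < 2 * τ := by linarith
        rw [div_add' _ _ _ (ne_of_gt h2τ), div_le_iff₀ h2τ] at this
        nlinarith [sq_nonneg (2 * (-x - κ) + τ - s)]
      · push_neg at hx; nlinarith
    · by_cases hx : κ < x
      · have := h1 hx
        have h2τ : 0 < 2 * τ := by linarith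
        rw [div_add' _ _ _ (ne_of_gt h2τ), div_le_iff₀ h2τ] at this
        nlinarith [sq_nonneg (2 * (x - κ) + τ - s)]
      · push_neg at hx; nlinarith
  · rintro ⟨hl, hu⟩
    have h2τ : 0 < 2 * τ := by linarith
    constructor
    · intro hx
      rw [div_add' _ _ _ (ne_of_gt h2τ), div_le_iff₀ h2τ]
      nlinarith
    · intro hx
      rw [div_add' _ _ _ (ne_of_gt h2τ), div_le_iff₀ h2τ]
      nlinarith

/-- Theorem 1: the probability that the cloaking attack is
undetected by the SOTA IDS equals the probability that the (Gaussian) normalized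
identification error of the first attack batch lies in the interval
[(τ − √(τ² + 8τΓ))/2 − κ, (−τ + √(τ² + 8τΓ))/2 + κ]. -/
theorem sota_attack_success_probability
    {Ω : Type*} [MeasurableSpace Ω] (P : Measure Ω) [IsProbabilityMeasure P]
    (τ Γ κ : ℝ) (hτ : 0 < τ) (hΓ : 0 < Γ) (hκ : 0 ≤ κ)
    (μ₀ σ₀ : ℝ) (hσ₀ : 0 < σ₀)
    (e : Ω → ℝ) (hmeas : Measurable e)
    (hgauss : Measure.map e P = gaussianReal μ₀ (Real.toNNReal (σ₀ ^ 2))) :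
    P {ω | (κ < e ω → (e ω - κ) ^ 2 / (2 * τ) + (e ω - κ) / 2 ≤ Γ) ∧
           (e ω < -κ → (-e ω - κ) ^ 2 / (2 * τ) + (-e ω - κ) / 2 ≤ Γ)} =
    P {ω | (τ - Real.sqrt (τ ^ 2 + 8 * τ * Γ)) / 2 - κ ≤ e ω ∧
           e ω ≤ (-τ + Real.sqrt (τ ^ 2 + 8 * τ * Γ)) / 2 + κ} := by
  congr 1
  ext ω
  exact key_iff τ Γ κ hτ hΓ hκ (e ω)
end

section
/- Let T, O be real numbers, N ≥ 1 an integer, and let (η_j)_{j≥0} be real numbers. Define arrival times a_j = j·T − j·O + η_j, the per-batch average offset O_avg[k] = T − (a_{kN} − a_{(k−1)N})/N for k ≥ 1, and the accumulated offset O_acc[k] = Σ_{i=1}^{k} N·O_avg[i]. Then for every k ≥ 1, O_acc[k] = k·N·O − (η_{kN} − η_{0}), and the elapsed time t[k] = a_{kN} − a_{0} satisfies t[k] = k·N·(T − O) + η_{kN} − η_{0} and O_acc[k] = k·N·T − t[k]. -/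
/-!
Each batch contributes `N · O_avg[i] = N·T − (a_{iN} − a_{(i−1)N})`, so the accumulated offset
telescopes to `k·N·T − (a_{kN} − a_0) = k·N·T − t[k]`. Substituting the timing model into
`a_{kN} − a_0` gives `k·N·(T − O) + η_{kN} − η_0`, and the first identity follows.
-/

open Finset

theorem sum_Icc_one_sub_pred {M : Type*} [AddCommGroup M] (f : ℕ → M) (k : ℕ) :
    ∑ i ∈ Icc 1 k, (f i - f (i - 1)) = f k - f 0 := by
  rw [← Ico_add_one_right_eq_Icc, sum_Ico_eq_sum_range, Nat.add_sub_cancel]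
  simpa [add_comm 1] using sum_range_sub f k

theorem natCast_mul_batch_offset_eq (T : ℝ) (N : ℕ) (a : ℕ → ℝ) (i : ℕ) :
    (N : ℝ) * (T - (a (i * N) - a ((i - 1) * N)) / N) =
      N * T - (a (i * N) - a ((i - 1) * N)) := by
  rw [mul_sub, mul_div_cancel_of_imp']
  intro hN
  obtain rfl : N = 0 := by exact_mod_cast hN
  simp

theorem sum_batch_offsets_eq (T : ℝ) (N : ℕ) (a Oavg : ℕ → ℝ)
    (hOavg : ∀ k, 1 ≤ k → Oavg k = T - (a (k * N) - a ((k - 1) * N)) / (N : ℝ)) (k : ℕ) :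
    ∑ i ∈ Icc 1 k, (N : ℝ) * Oavg i = k * N * T - (a (k * N) - a 0) := by
  calc ∑ i ∈ Icc 1 k, (N : ℝ) * Oavg i
      = ∑ i ∈ Icc 1 k, ((N : ℝ) * T - (a (i * N) - a ((i - 1) * N))) :=
        sum_congr rfl fun i hi ↦ by
          rw [hOavg i (mem_Icc.1 hi).1, natCast_mul_batch_offset_eq]
    _ = k * N * T - (a (k * N) - a 0) := by
        rw [sum_sub_distrib, sum_Icc_one_sub_pred (fun i ↦ a (i * N)), sum_const,
          Nat.card_Icc, nsmul_eq_mul, zero_mul]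
        push_cast
        ring

theorem sub_arrival_zero (T O : ℝ) (η a : ℕ → ℝ)
    (ha : ∀ j, a j = (j : ℝ) * T - (j : ℝ) * O + η j) (j : ℕ) :
    a j - a 0 = j * (T - O) + (η j - η 0) := by
  rw [ha, ha]
  push_cast
  ring

theorem ntp_accumulated_offset_elapsed_time_general
    (T O : ℝ) (N : ℕ) (η : ℕ → ℝ)
    (a : ℕ → ℝ) (ha : ∀ j, a j = (j : ℝ) * T - (j : ℝ) * O + η j)
    (Oavg : ℕ → ℝ)
    (hOavg : ∀ k, 1 ≤ k → Oavg k = T - (a (k * N) - a ((k - 1) * N)) / (N : ℝ))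
    (Oacc : ℕ → ℝ)
    (hOacc : ∀ k, Oacc k = ∑ i ∈ Finset.Icc 1 k, (N : ℝ) * Oavg i)
    (t : ℕ → ℝ) (ht : ∀ k, t k = a (k * N) - a 0) :
    ∀ k, 1 ≤ k →
      Oacc k = (k : ℝ) * (N : ℝ) * O - (η (k * N) - η 0) ∧
      t k = (k : ℝ) * (N : ℝ) * (T - O) + η (k * N) - η 0 ∧
      Oacc k = (k : ℝ) * (N : ℝ) * T - t k := by
  intro k _
  have hacc : Oacc k = k * N * T - t k := by
    rw [hOacc, ht, sum_batch_offsets_eq T N a Oavg hOavg]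
  have helapsed : t k = k * N * (T - O) + η (k * N) - η 0 := by
    rw [ht, sub_arrival_zero T O η a ha]
    push_cast
    ring
  exact ⟨by rw [hacc, helapsed]; ring, helapsed, hacc⟩

/-- in the NTP-based IDS (before the attack), the accumulated
offset satisfies O_acc[k] = kNO − (η_{kN} − η₀), the elapsed time satisfies
t[k] = kN(T − O) + η_{kN} − η₀, and O_acc[k] = kNT − t[k]. -/
theorem ntp_accumulated_offset_elapsed_time
    (T O : ℝ) (N : ℕ) (hN : 1 ≤ N) (η : ℕ → ℝ)
    (a : ℕ → ℝ) (ha : ∀ j, a j = (j : ℝ) * T - (j : ℝ) * O + η j)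
    (Oavg : ℕ → ℝ)
    (hOavg : ∀ k, 1 ≤ k → Oavg k = T - (a (k * N) - a ((k - 1) * N)) / (N : ℝ))
    (Oacc : ℕ → ℝ)
    (hOacc : ∀ k, Oacc k = ∑ i ∈ Finset.Icc 1 k, (N : ℝ) * Oavg i)
    (t : ℕ → ℝ) (ht : ∀ k, t k = a (k * N) - a 0) :
    ∀ k, 1 ≤ k →
      Oacc k = (k : ℝ) * (N : ℝ) * O - (η (k * N) - η 0) ∧
      t k = (k : ℝ) * (N : ℝ) * (T - O) + η (k * N) - η 0 ∧
      Oacc k = (k : ℝ) * (N : ℝ) * T - t k :=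
  ntp_accumulated_offset_elapsed_time_general T O N η a ha Oavg hOavg Oacc hOacc t ht
end

section
/- Let T, O, ΔT be real numbers, N ≥ 1 and m ≥ 1 integers, and let (η_j)_{j≥0} be real numbers. Suppose the arrival times satisfy a_j = j·T − j·O + η_j for j ≤ (m−1)N and a_j = j·T − j·O + (j − (m−1)N)·ΔT + η_j for j > (m−1)N (the attack adds delay ΔT per message starting from the first message of batch m). Define t[k] = a_{kN} − a_0 and O_acc[k] = kNT − t[k]. Then for every k ≥ m: t[k] = t[m−1] + (k − m + 1)·N·(T − O + ΔT) + η_{kN} − η_{(m−1)N} and O_acc[k] = O_acc[m−1] − (k − m + 1)·N·(−O + ΔT) − (η_{kN} − η_{(m−1)N}). -/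
/-- in the NTP-based IDS under a cloaking attack with residual
delay ΔT starting from the first message of batch m, for all k ≥ m the elapsed
time and accumulated offset satisfy
t[k] = t[m−1] + (k−m+1)·N·(T−O+ΔT) + η_{kN} − η_{(m−1)N} and
O_acc[k] = O_acc[m−1] − (k−m+1)·N·(−O+ΔT) − (η_{kN} − η_{(m−1)N}). -/
theorem ntp_offset_elapsed_time_under_attack
    (T O ΔT : ℝ) (N m : ℕ) (hN : 1 ≤ N) (hm : 1 ≤ m) (η : ℕ → ℝ)
    (a : ℕ → ℝ)
    (ha_pre : ∀ j, j ≤ (m - 1) * N → a j = (j : ℝ) * T - (j : ℝ) * O + η j)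
    (ha_post : ∀ j, (m - 1) * N < j →
      a j = (j : ℝ) * T - (j : ℝ) * O + ((j : ℝ) - ((m - 1) * N : ℕ)) * ΔT + η j)
    (t : ℕ → ℝ) (ht : ∀ k, t k = a (k * N) - a 0)
    (Oacc : ℕ → ℝ) (hOacc : ∀ k, Oacc k = (k : ℝ) * (N : ℝ) * T - t k) :
    ∀ k, m ≤ k →
      t k = t (m - 1) + ((k : ℝ) - (m : ℝ) + 1) * (N : ℝ) * (T - O + ΔT) +
        η (k * N) - η ((m - 1) * N) ∧
      Oacc k = Oacc (m - 1) - ((k : ℝ) - (m : ℝ) + 1) * (N : ℝ) * (-O + ΔT) -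
        (η (k * N) - η ((m - 1) * N)) := by
  intro k hk
  have hlt : (m - 1) * N < k * N := by
    have : m - 1 < k := lt_of_lt_of_le (Nat.sub_lt hm one_pos) hk
    exact (Nat.mul_lt_mul_right (Nat.lt_of_lt_of_le one_pos hN)).mpr this
  have h0 : a 0 = 0 * T - 0 * O + η 0 := by
    have := ha_pre 0 (Nat.zero_le _); simpa using this
  have hpre : a ((m - 1) * N) = ((m - 1) * N : ℕ) * T - ((m - 1) * N : ℕ) * O + η ((m - 1) * N) :=
    ha_pre _ le_rfl
  have hpost : a (k * N) = ((k * N : ℕ) : ℝ) * T - ((k * N : ℕ) : ℝ) * O +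
      (((k * N : ℕ) : ℝ) - ((m - 1) * N : ℕ)) * ΔT + η (k * N) := ha_post _ hlt
  have hm1 : ((m - 1 : ℕ) : ℝ) = (m : ℝ) - 1 := by
    push_cast [Nat.cast_sub hm]; ring
  have h1 : t k = t (m - 1) + ((k : ℝ) - (m : ℝ) + 1) * (N : ℝ) * (T - O + ΔT) +
      η (k * N) - η ((m - 1) * N) := by
    rw [ht, ht, h0, hpre, hpost]
    push_cast [hm1]
    ring
  refine ⟨h1, ?_⟩
  rw [hOacc, hOacc, h1, hm1]
  ring
end

section
/- Let Γ > 0 and κ ≥ Γ, let n be a positive integer, and let (e_n[k])_{k≥0} be independent real random variables where e_n[k] has probability density f_k. Define the CUSUM chain started at time k from state (z⁺, z⁻) ∈ [0, Γ]² by L⁺[k] = z⁺, L⁻[k] = z⁻ and, for j ≥ k, L⁺[j+1] = max(0, L⁺[j] + e_n[j] − κ), L⁻[j+1] = max(0, L⁻[j] − e_n[j] − κ). Let α = min{ j ≥ k : max(L⁺[j+1], L⁻[j+1]) > Γ } and g_{n,k}(z⁺, z⁻) = Pr(α > n). Then g_{n,k}(z⁺, z⁻) = ∫_{z⁻−κ−Γ}^{z⁻−κ}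 g_{n,k+1}(0, z⁻ − r − κ)·f_k(r) dr + g_{n,k+1}(0, 0)·Pr(e_n[k] ∈ [z⁻ − κ, κ − z⁺]) + ∫_{κ−z⁺}^{κ−z⁺+Γ} g_{n,k+1}(z⁺ + r − κ, 0)·f_k(r) dr. -/
open MeasureTheory ProbabilityTheory

/-- The CUSUM chain started at time `k` from state `z = (L⁺[k], L⁻[k])`:
`cusumChain κ e k z s` is the state `(L⁺[k+s], L⁻[k+s])`, where for `j ≥ k`
`L⁺[j+1] = max 0 (L⁺[j] + e j − κ)` and `L⁻[j+1] = max 0 (L⁻[j] − e j − κ)`. -/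
def cusumChain (κ : ℝ) (e : ℕ → ℝ) (k : ℕ) (z : ℝ × ℝ) : ℕ → ℝ × ℝ
  | 0 => z
  | s + 1 =>
    (max 0 ((cusumChain κ e k z s).1 + e (k + s) - κ),
     max 0 ((cusumChain κ e k z s).2 - e (k + s) - κ))

/-- `gProb P e κ Γ n k z` is the probability `Pr(α > n)` that the CUSUM chain
started at batch `k` in state `z` produces no detection through batch `n`,
where `α = min{j ≥ k : max(L⁺[j+1], L⁻[j+1]) > Γ}`. -/
noncomputable def gProb {Ω : Type*} [MeasurableSpace Ω] (P : Measure Ω)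
    (e : ℕ → Ω → ℝ) (κ Γ : ℝ) (n k : ℕ) (z : ℝ × ℝ) : ℝ :=
  (P {ω | ∀ j, k ≤ j → j ≤ n →
      max (cusumChain κ (fun i => e i ω) k z (j + 1 - k)).1
          (cusumChain κ (fun i => e i ω) k z (j + 1 - k)).2 ≤ Γ}).toReal

/-! Condition on the first error `r = e k`. By independence, the no-detection probability from
time `k` is the `r`-integral of the no-detection probability from time `k + 1`, started at the
one-step state `cusumStep κ z r`, over the `r` for which that state does not already exceed `Γ`:
the interval `[z⁻ - κ - Γ, κ - z⁺ + Γ]`. Cutting it at `z⁻ - κ ≤ κ - z⁺`, the one-step state is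
`(0, z⁻ - r - κ)`, `(0, 0)` and `(z⁺ + r - κ, 0)` on the three pieces, which are the three terms
of the recursion. -/

open Set

def cusumStep (κ : ℝ) (z : ℝ × ℝ) (r : ℝ) : ℝ × ℝ :=
  (max 0 (z.1 + r - κ), max 0 (z.2 - r - κ))

section Chain

variable {κ Γ : ℝ} {n k : ℕ} {z : ℝ × ℝ}

lemma measurable_cusumStep (κ : ℝ) :
    Measurable fun p : (ℝ × ℝ) × ℝ => cusumStep κ p.1 p.2 := by
  unfold cusumStep; fun_prop

lemma cusumChain_succ (κ : ℝ) (e : ℕ → ℝ) (k : ℕ) (z : ℝ × ℝ) (s : ℕ) :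
    cusumChain κ e k z (s + 1) = cusumStep κ (cusumChain κ e k z s) (e (k + s)) :=
  rfl

lemma cusumChain_succ' (κ : ℝ) (e : ℕ → ℝ) (k : ℕ) (z : ℝ × ℝ) (s : ℕ) :
    cusumChain κ e k z (s + 1) = cusumChain κ e (k + 1) (cusumStep κ z (e k)) s := by
  induction s with
  | zero => rfl
  | succ s ih => rw [cusumChain_succ, ih, cusumChain_succ, Nat.add_right_comm]; rfl

lemma cusumChain_congr {e e' : ℕ → ℝ} {s : ℕ} (h : ∀ i, k ≤ i → i < k + s → e i = e' i) :
    cusumChain κ e k z s = cusumChain κ e' k z s := by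
  induction s with
  | zero => rfl
  | succ s ih =>
    rw [cusumChain_succ, cusumChain_succ, ih fun i hi hi' => h i hi (by omega),
      h (k + s) (by omega) (by omega)]

lemma measurable_cusumChain (κ : ℝ) (k s : ℕ) :
    Measurable fun p : (ℝ × ℝ) × (ℕ → ℝ) => cusumChain κ p.2 k p.1 s := by
  induction s with
  | zero => exact measurable_fst
  | succ s ih =>
    simp only [cusumChain_succ]
    exact (measurable_cusumStep κ).comp
      (ih.prodMk ((measurable_pi_apply (k + s)).comp measurable_snd))

lemma max_cusumStep_le_iff (hΓ : 0 ≤ Γ) (r : ℝ) :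
    max (cusumStep κ z r).1 (cusumStep κ z r).2 ≤ Γ ↔ r ∈ Icc (z.2 - κ - Γ) (κ - z.1 + Γ) := by
  simp only [cusumStep, max_le_iff, hΓ, true_and, mem_Icc]
  constructor <;> rintro ⟨h₁, h₂⟩ <;> constructor <;> linarith

lemma cusumStep_of_le (hz : z.1 + z.2 ≤ 2 * κ) {r : ℝ} (hr : r ≤ z.2 - κ) :
    cusumStep κ z r = (0, z.2 - r - κ) :=
  Prod.ext (max_eq_left (by linarith)) (max_eq_right (by linarith))

lemma cusumStep_of_mem_Icc {r : ℝ} (hr : r ∈ Icc (z.2 - κ) (κ - z.1)) :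
    cusumStep κ z r = (0, 0) :=
  Prod.ext (max_eq_left (by linarith [hr.2])) (max_eq_left (by linarith [hr.1]))

lemma cusumStep_of_ge (hz : z.1 + z.2 ≤ 2 * κ) {r : ℝ} (hr : κ - z.1 ≤ r) :
    cusumStep κ z r = (z.1 + r - κ, 0) :=
  Prod.ext (max_eq_right (by linarith)) (max_eq_left (by linarith))

def noDetection (κ Γ : ℝ) (n k : ℕ) (z : ℝ × ℝ) : Set (ℕ → ℝ) :=
  {x | ∀ j, k ≤ j → j ≤ n →
    max (cusumChain κ x k z (j + 1 - k)).1 (cusumChain κ x k z (j + 1 - k)).2 ≤ Γ}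

lemma measurableSet_setOf_mem_noDetection (κ Γ : ℝ) (n k : ℕ) :
    MeasurableSet {p : (ℝ × ℝ) × (ℕ → ℝ) | p.2 ∈ noDetection κ Γ n k p.1} := by
  simp only [noDetection, mem_iInter, ofPred_forall]
  refine .iInter fun j => .iInter fun (_ : k ≤ j) => .iInter fun (_ : j ≤ n) => ?_
  have h := measurable_cusumChain κ k (j + 1 - k)
  exact measurableSet_le ((measurable_fst.comp h).max (measurable_snd.comp h)) measurable_const

lemma measurableSet_noDetection (κ Γ : ℝ) (n k : ℕ) (z : ℝ × ℝ) :
    MeasurableSet (noDetection κ Γ n k z) :=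
  measurable_prodMk_left (measurableSet_setOf_mem_noDetection κ Γ n k)

lemma mem_noDetection_congr {x y : ℕ → ℝ} (h : ∀ i, k ≤ i → i ≤ n → x i = y i) :
    x ∈ noDetection κ Γ n k z ↔ y ∈ noDetection κ Γ n k z := by
  refine forall₂_congr fun j hkj => imp_congr_right fun hjn => ?_
  rw [cusumChain_congr fun i hki hi => h i hki (by omega)]

lemma mem_noDetection_iff_cusumStep (hk : k ≤ n) {x : ℕ → ℝ} :
    x ∈ noDetection κ Γ n k z ↔ max (cusumStep κ z (x k)).1 (cusumStep κ z (x k)).2 ≤ Γ ∧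
      x ∈ noDetection κ Γ n (k + 1) (cusumStep κ z (x k)) := by
  have hshift : ∀ j, k + 1 ≤ j → j + 1 - k = (j + 1 - (k + 1)) + 1 := fun j hj => by omega
  have hfirst : k + 1 - k = 0 + 1 := by omega
  constructor
  · intro h
    refine ⟨by have h0 := h k le_rfl hk; rwa [hfirst, cusumChain_succ'] at h0, fun j hj hjn => ?_⟩
    simpa only [hshift j hj, cusumChain_succ'] using h j (by omega) hjn
  · rintro ⟨h0, h⟩ j hkj hjn
    rcases hkj.eq_or_lt with rfl | hlt
    · rwa [hfirst, cusumChain_succ']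
    · rw [hshift j hlt, cusumChain_succ']
      exact h j hlt hjn

end Chain

namespace ProbabilityTheory

variable {Ω : Type*} [MeasurableSpace Ω] {P : Measure Ω}

lemma iIndepFun.indepFun_extendByZero {ι β : Type*} [DecidableEq ι] [MeasurableSpace β] [Zero β]
    {f : ι → Ω → β} (hf : iIndepFun f P) (hmeas : ∀ i, Measurable (f i)) {i : ι} {T : Finset ι}
    (hi : i ∉ T) :
    IndepFun (f i) (fun ω j => if j ∈ T then f j ω else 0) P := by
  have hext : Measurable fun (y : T → β) (j : ι) => if h : j ∈ T then y ⟨j, h⟩ else 0 := by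
    refine measurable_pi_lambda _ fun j => ?_
    by_cases h : j ∈ T
    · simpa [h] using measurable_pi_apply (⟨j, h⟩ : T)
    · simp [h]
  exact (hf.indepFun_finset {i} T (Finset.disjoint_singleton_left.mpr hi) hmeas).comp
    (measurable_pi_apply ⟨i, Finset.mem_singleton_self i⟩) hext

lemma IndepFun.measure_preimage_prodMk_eq_lintegral [IsFiniteMeasure P] {α β : Type*}
    [MeasurableSpace α] [MeasurableSpace β] {X : Ω → α} {Y : Ω → β} (hXY : IndepFun X Y P)
    (hX : Measurable X) (hY : Measurable Y) {S : Set (α × β)} (hS : MeasurableSet S) :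
    P ((fun ω => (X ω, Y ω)) ⁻¹' S) = ∫⁻ x, P {ω | (x, Y ω) ∈ S} ∂P.map X := by
  rw [← Measure.map_apply (hX.prodMk hY) hS, hXY.map_prod_eq_prod_map_map hX.aemeasurable
    hY.aemeasurable, Measure.prod_apply hS]
  refine lintegral_congr fun x => ?_
  rw [Measure.map_apply hY (measurable_prodMk_left hS)]
  rfl

end ProbabilityTheory

lemma lintegral_Icc_eq_add_add_Ioc {μ : Measure ℝ} [NullSingletonClass μ] {F : ℝ → ENNReal}
    {a b c d : ℝ} (hab : a ≤ b) (hbc : b ≤ c) (hcd : c ≤ d) :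
    ∫⁻ r in Icc a d, F r ∂μ =
      (∫⁻ r in Ioc a b, F r ∂μ) + (∫⁻ r in Ioc b c, F r ∂μ) + ∫⁻ r in Ioc c d, F r ∂μ := by
  have hdisj : Disjoint (Ioc a b) (Ioc b c ∪ Ioc c d) := by
    rw [Ioc_union_Ioc_eq_Ioc hbc hcd]
    exact Ioc_disjoint_Ioc_of_le le_rfl
  rw [setLIntegral_congr Ioc_ae_eq_Icc.symm, ← Ioc_union_Ioc_eq_Ioc hab (hbc.trans hcd),
    ← Ioc_union_Ioc_eq_Ioc hbc hcd,
    lintegral_union (measurableSet_Ioc.union measurableSet_Ioc) hdisj,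
    lintegral_union measurableSet_Ioc (Ioc_disjoint_Ioc_of_le le_rfl), add_assoc]

lemma toReal_setLIntegral_Ioc_withDensity_ofReal {f : ℝ → ℝ} (hf : Measurable f)
    (hf0 : ∀ r, 0 ≤ f r) {G : ℝ → ENNReal} (hG : Measurable G) (hG_top : ∀ r, G r ≠ ⊤)
    {u v : ℝ} (huv : u ≤ v) :
    (∫⁻ r in Ioc u v, G r ∂volume.withDensity fun r => ENNReal.ofReal (f r)).toReal =
      ∫ r in u..v, (G r).toReal * f r := by
  rw [intervalIntegral.integral_of_le huv,
    ← integral_toReal hG.aemeasurable (ae_of_all _ fun r => (hG_top r).lt_top),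
    setIntegral_withDensity_eq_setIntegral_toReal_smul hf.ennreal_ofReal
      (ae_of_all _ fun _ => ENNReal.ofReal_lt_top) _ measurableSet_Ioc]
  simp_rw [ENNReal.toReal_ofReal (hf0 _), smul_eq_mul, mul_comm]

lemma toReal_setLIntegral_cusumStep {f : ℝ → ℝ} (hf : Measurable f) (hf0 : ∀ r, 0 ≤ f r)
    {μ : Measure ℝ} [IsFiniteMeasure μ]
    (hμ : μ = volume.withDensity fun r => ENNReal.ofReal (f r))
    {F : ℝ × ℝ → ENNReal} (hF : Measurable F) (hF1 : ∀ w, F w ≤ 1)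
    {κ Γ zp zm : ℝ} (hΓ : 0 ≤ Γ) (hz : zp + zm ≤ 2 * κ) :
    (∫⁻ r in Icc (zm - κ - Γ) (κ - zp + Γ), F (cusumStep κ (zp, zm) r) ∂μ).toReal =
      (∫ r in (zm - κ - Γ)..(zm - κ), (F (0, zm - r - κ)).toReal * f r) +
      (F (0, 0)).toReal * (μ (Icc (zm - κ) (κ - zp))).toReal +
      ∫ r in (κ - zp)..(κ - zp + Γ), (F (zp + r - κ, 0)).toReal * f r := by
  have : NullSingletonClass μ :=
    ⟨fun x => (hμ ▸ withDensity_absolutelyContinuous _ _) (measure_singleton x)⟩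
  have hF_top : ∀ w, F w ≠ ⊤ := fun w => ne_top_of_le_ne_top ENNReal.one_ne_top (hF1 w)
  have hfin : ∀ s, ∫⁻ r in s, F (cusumStep κ (zp, zm) r) ∂μ ≠ ⊤ := fun s =>
    ne_top_of_le_ne_top (measure_ne_top μ s)
      ((lintegral_mono fun r => hF1 _).trans (setLIntegral_one s).le)
  rw [lintegral_Icc_eq_add_add_Ioc (b := zm - κ) (c := κ - zp) (by linarith) (by linarith)
      (by linarith),
    ENNReal.toReal_add (ENNReal.add_ne_top.mpr ⟨hfin _, hfin _⟩) (hfin _),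
    ENNReal.toReal_add (hfin _) (hfin _)]
  congr 2
  · rw [setLIntegral_congr_fun measurableSet_Ioc fun r hr => by rw [cusumStep_of_le hz hr.2],
      hμ]
    exact toReal_setLIntegral_Ioc_withDensity_ofReal hf hf0 (by fun_prop)
      (fun _ => hF_top _) (by linarith)
  · rw [setLIntegral_congr_fun measurableSet_Ioc fun r hr => by
      rw [cusumStep_of_mem_Icc ⟨hr.1.le, hr.2⟩], setLIntegral_const, ENNReal.toReal_mul,
      measure_congr Ioc_ae_eq_Icc]
  · rw [setLIntegral_congr_fun measurableSet_Ioc fun r hr => by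
      rw [cusumStep_of_ge hz hr.1.le], hμ]
    exact toReal_setLIntegral_Ioc_withDensity_ofReal hf hf0 (by fun_prop)
      (fun _ => hF_top _) (by linarith)

section Probability

variable {Ω : Type*} [MeasurableSpace Ω] {P : Measure Ω} {e : ℕ → Ω → ℝ}

lemma gProb_eq_map_noDetection (hmeas : ∀ i, Measurable (e i)) (κ Γ : ℝ) (n k : ℕ)
    (z : ℝ × ℝ) :
    gProb P e κ Γ n k z = (P.map (fun ω i => e i ω) (noDetection κ Γ n k z)).toReal := by
  rw [Measure.map_apply (measurable_pi_lambda _ hmeas) (measurableSet_noDetection κ Γ n k z)]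
  rfl

lemma measurable_measure_noDetection (ν : Measure (ℕ → ℝ)) [SFinite ν] (κ Γ : ℝ) (n k : ℕ) :
    Measurable fun z => ν (noDetection κ Γ n k z) :=
  measurable_measure_prodMk_left (measurableSet_setOf_mem_noDetection κ Γ n k)

lemma map_noDetection_eq_setLIntegral [IsFiniteMeasure P] (hmeas : ∀ i, Measurable (e i))
    (hindep : iIndepFun e P) {κ Γ : ℝ} (hΓ : 0 ≤ Γ) {n k : ℕ} (hk : k ≤ n) (z : ℝ × ℝ) :
    P.map (fun ω i => e i ω) (noDetection κ Γ n k z) =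
      ∫⁻ r in Icc (z.2 - κ - Γ) (κ - z.1 + Γ),
        P.map (fun ω i => e i ω) (noDetection κ Γ n (k + 1) (cusumStep κ z r)) ∂P.map (e k) := by
  set E : Ω → ℕ → ℝ := fun ω i => e i ω
  set Y : Ω → ℕ → ℝ := fun ω i => if i ∈ Finset.Icc (k + 1) n then e i ω else 0
  have hE : Measurable E := measurable_pi_lambda _ hmeas
  have hY : Measurable Y := measurable_pi_lambda _ fun i => by
    by_cases hi : i ∈ Finset.Icc (k + 1) n
    · simp only [Y, if_pos hi]; exact hmeas i
    · simp only [Y, if_neg hi]; exact measurable_const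
  -- `Y` is independent of `e k`, yet determines the chain from time `k + 1` up to `n`
  have hYE : ∀ ω w, Y ω ∈ noDetection κ Γ n (k + 1) w ↔ E ω ∈ noDetection κ Γ n (k + 1) w :=
    fun ω w => mem_noDetection_congr fun i hi hin => by
      simp only [Y, E, if_pos (Finset.mem_Icc.mpr ⟨hi, hin⟩)]
  set S := Prod.fst ⁻¹' Icc (z.2 - κ - Γ) (κ - z.1 + Γ) ∩
    {p : ℝ × (ℕ → ℝ) | p.2 ∈ noDetection κ Γ n (k + 1) (cusumStep κ z p.1)}
  have hS : MeasurableSet S := (measurableSet_Icc.preimage measurable_fst).inter <|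
    (measurableSet_setOf_mem_noDetection κ Γ n (k + 1)).preimage
      (((measurable_cusumStep κ).comp (measurable_const.prodMk measurable_fst)).prodMk
        measurable_snd)
  have hES : E ⁻¹' noDetection κ Γ n k z = (fun ω => (e k ω, Y ω)) ⁻¹' S := by
    ext ω
    simp only [mem_preimage, mem_noDetection_iff_cusumStep hk, max_cusumStep_le_iff hΓ, S,
      mem_inter_iff, mem_ofPred_eq, hYE]
    rfl
  have hsection : ∀ r, P {ω | (r, Y ω) ∈ S} = (Icc (z.2 - κ - Γ) (κ - z.1 + Γ)).indicator
      (fun r => P.map E (noDetection κ Γ n (k + 1) (cusumStep κ z r))) r := by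
    intro r
    by_cases hr : r ∈ Icc (z.2 - κ - Γ) (κ - z.1 + Γ)
    · have hsec : {ω | (r, Y ω) ∈ S} = E ⁻¹' noDetection κ Γ n (k + 1) (cusumStep κ z r) := by
        ext ω
        simp only [S, mem_inter_iff, mem_preimage, mem_ofPred_eq, hr, true_and, hYE]
      rw [indicator_of_mem hr, hsec, Measure.map_apply hE (measurableSet_noDetection ..)]
    · have hsec : {ω | (r, Y ω) ∈ S} = ∅ := eq_empty_of_forall_notMem fun ω hω => hr hω.1
      rw [indicator_of_notMem hr, hsec, measure_empty]
  have hXY : IndepFun (e k) Y P := hindep.indepFun_extendByZero hmeas (by simp)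
  rw [Measure.map_apply hE (measurableSet_noDetection κ Γ n k z), hES,
    hXY.measure_preimage_prodMk_eq_lintegral (hmeas k) hY hS]
  simp_rw [hsection]
  exact lintegral_indicator measurableSet_Icc _

end Probability

theorem cusum_no_detection_recursion_general
    {Ω : Type*} [MeasurableSpace Ω] (P : Measure Ω) [IsProbabilityMeasure P]
    (Γ κ : ℝ) (hΓ : 0 < Γ) (hκ : Γ ≤ κ)
    (n : ℕ) (k : ℕ) (hk : k ≤ n)
    (e : ℕ → Ω → ℝ) (hmeas : ∀ i, Measurable (e i))
    (hindep : iIndepFun e P)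
    (f : ℕ → ℝ → ℝ) (hf_meas : ∀ i, Measurable (f i)) (hf_nonneg : ∀ i r, 0 ≤ f i r)
    (hdensity : ∀ i, Measure.map (e i) P =
      MeasureTheory.volume.withDensity (fun r => ENNReal.ofReal (f i r)))
    (zp zm : ℝ) (hzp : zp ∈ Set.Icc 0 Γ) (hzm : zm ∈ Set.Icc 0 Γ) :
    gProb P e κ Γ n k (zp, zm) =
      (∫ r in (zm - κ - Γ)..(zm - κ), gProb P e κ Γ n (k + 1) (0, zm - r - κ) * f k r) +
      gProb P e κ Γ n (k + 1) (0, 0) *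
        (P {ω | e k ω ∈ Set.Icc (zm - κ) (κ - zp)}).toReal +
      (∫ r in (κ - zp)..(κ - zp + Γ), gProb P e κ Γ n (k + 1) (zp + r - κ, 0) * f k r) := by
  have hz : zp + zm ≤ 2 * κ := by linarith [hzp.2, hzm.2]
  have : IsProbabilityMeasure (P.map fun ω i => e i ω) :=
    Measure.isProbabilityMeasure_map (measurable_pi_lambda _ hmeas).aemeasurable
  have : IsProbabilityMeasure (P.map (e k)) :=
    Measure.isProbabilityMeasure_map (hmeas k).aemeasurable
  simp only [gProb_eq_map_noDetection hmeas]
  rw [map_noDetection_eq_setLIntegral hmeas hindep hΓ.le hk,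
    toReal_setLIntegral_cusumStep (hf_meas k) (hf_nonneg k) (hdensity k)
      (measurable_measure_noDetection _ κ Γ n (k + 1)) (fun _ => prob_le_one) hΓ.le hz,
    Measure.map_apply (hmeas k) measurableSet_Icc]
  rfl

/-- Lemma 2: the no-detection probability of the CUSUM detector
satisfies the backward recursion
g_{n,k}(z⁺,z⁻) = ∫_{z⁻−κ−Γ}^{z⁻−κ} g_{n,k+1}(0, z⁻−r−κ)·f_k(r) dr
  + g_{n,k+1}(0,0)·Pr(e_n[k] ∈ [z⁻−κ, κ−z⁺])
  + ∫_{κ−z⁺}^{κ−z⁺+Γ} g_{n,k+1}(z⁺+r−κ, 0)·f_k(r) dr. -/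
theorem cusum_no_detection_recursion
    {Ω : Type*} [MeasurableSpace Ω] (P : Measure Ω) [IsProbabilityMeasure P]
    (Γ κ : ℝ) (hΓ : 0 < Γ) (hκ : Γ ≤ κ)
    (n : ℕ) (hn : 0 < n) (k : ℕ) (hk : k ≤ n)
    (e : ℕ → Ω → ℝ) (hmeas : ∀ i, Measurable (e i))
    (hindep : iIndepFun e P)
    (f : ℕ → ℝ → ℝ) (hf_meas : ∀ i, Measurable (f i)) (hf_nonneg : ∀ i r, 0 ≤ f i r)
    (hdensity : ∀ i, Measure.map (e i) P =
      MeasureTheory.volume.withDensity (fun r => ENNReal.ofReal (f i r)))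
    (zp zm : ℝ) (hzp : zp ∈ Set.Icc 0 Γ) (hzm : zm ∈ Set.Icc 0 Γ) :
    gProb P e κ Γ n k (zp, zm) =
      (∫ r in (zm - κ - Γ)..(zm - κ), gProb P e κ Γ n (k + 1) (0, zm - r - κ) * f k r) +
      gProb P e κ Γ n (k + 1) (0, 0) *
        (P {ω | e k ω ∈ Set.Icc (zm - κ) (κ - zp)}).toReal +
      (∫ r in (κ - zp)..(κ - zp + Γ), gProb P e κ Γ n (k + 1) (zp + r - κ, 0) * f k r) :=
  cusum_no_detection_recursion_general P Γ κ hΓ hκ n k hk e hmeas hindep f hf_meas hf_nonneg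
    hdensity zp zm hzp hzm
end
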